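/- Let G be a graph, k a positive integer, and v a vertex of G such that the sum of degrees of the neighbors of v satisfies Σ_{w∈N(v)} d(w) ≤ k. If G − v has an acyclic edge-coloring with k colors, then G has an acyclic edge-coloring with k colors. -/

import Mathlib

/-!
Give each edge `vw` its own fresh color `f w`, i.e. a color that the coloring of `G - v` does not
use on any edge at a neighbour of `v`. At most `∑_{w ∈ N(v)} (d(w) - 1) ≤ k - d(v)` colors are
used there, so `d(v)` fresh colors are available. The result is proper, and no bicolored cycle
passes through `v`: such a cycle would leave `v` along edges `vw`, `vy` of the two distinct colors
`f w`, `f y`, so its next edge `wz` would have color `f y`; but `wz` is an edge of `G - v` at the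
neighbour `w`, and `f y` is fresh.
-/

/-- A proper edge-coloring: edges sharing an endpoint get distinct colors. -/
def ProperEdgeColoring {V : Type*} (G : SimpleGraph V) (c : Sym2 V → ℕ) : Prop :=
  ∀ e₁ ∈ G.edgeSet, ∀ e₂ ∈ G.edgeSet, e₁ ≠ e₂ → (∃ v, v ∈ e₁ ∧ v ∈ e₂) → c e₁ ≠ c e₂

/-- The subgraph consisting of edges colored `a` or `b`. -/
def twoColorSubgraph {V : Type*} (G : SimpleGraph V) (c : Sym2 V → ℕ) (a b : ℕ) :
    SimpleGraph V where
  Adj x y := G.Adj x y ∧ (c s(x, y) = a ∨ c s(x, y) = b)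
  symm := by
    constructor
    intro x y h
    refine ⟨h.1.symm, ?_⟩
    rw [Sym2.eq_swap]
    exact h.2
  loopless := by
    constructor
    intro x h
    exact G.loopless.irrefl x h.1

/-- An acyclic edge-coloring: proper, and any two color classes induce an acyclic graph. -/
def AcyclicEdgeColoring {V : Type*} (G : SimpleGraph V) (c : Sym2 V → ℕ) : Prop :=
  ProperEdgeColoring G c ∧ ∀ a b : ℕ, (twoColorSubgraph G c a b).IsAcyclic

/-- `G` has an acyclic edge-coloring using colors `0, …, k-1`. -/
def HasAcyclicEdgeColoring {V : Type*} (G : SimpleGraph V) (k : ℕ) : Prop :=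
  ∃ c : Sym2 V → ℕ, AcyclicEdgeColoring G c ∧ ∀ e ∈ G.edgeSet, c e < k

open Finset

namespace SimpleGraph

variable {V : Type*} {G : SimpleGraph V}

lemma Walk.IsCycle.exists_adj_of_mem_support {u v : V} {p : G.Walk u u} (hp : p.IsCycle)
    (hv : v ∈ p.support) : ∃ w y x, w ≠ y ∧ x ≠ v ∧ G.Adj v w ∧ G.Adj v y ∧ G.Adj w x := by
  classical
  have hq : (p.rotate v hv).IsCycle := (isCycle_rotate hv).mpr hp
  have hlen := hq.three_le_length
  refine ⟨_, _, (p.rotate v hv).getVert 2, hq.snd_ne_penultimate, ?_, adj_snd hq.not_nil,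
    (adj_penultimate hq.not_nil).symm, (p.rotate v hv).adj_getVert_succ (i := 1) (by omega)⟩
  rw [Ne, hq.getVert_endpoint_iff (by omega)]
  omega

lemma isAcyclic_of_isAcyclic_induce {s : Set V} (hs : (G.induce s).IsAcyclic)
    (hcycle : ∀ u (p : G.Walk u u), p.IsCycle → ∀ x ∈ p.support, x ∈ s) : G.IsAcyclic := by
  intro u p hp
  refine hs (p.induce s (hcycle u p hp)) ?_
  rw [← Walk.isCycle_map_iff_of_injective (f := (Embedding.induce s).toHom) Subtype.val_injective,
    Walk.map_induce]
  exact hp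

lemma degree_induce_add_one_of_adj [Fintype V] [DecidableEq V] [DecidableRel G.Adj] {v : V}
    {w : ({u | u ≠ v} : Set V)} (h : G.Adj v w) :
    (G.induce {u | u ≠ v}).degree w + 1 = G.degree w := by
  rw [← card_neighborFinset_eq_degree, ← card_neighborFinset_eq_degree, ← card_map,
    map_neighborFinset_induce]
  have : G.neighborFinset w ∩ ({u | u ≠ v} : Set V).toFinset = (G.neighborFinset w).erase v := by
    ext; simp [and_comm]
  rw [this, card_erase_add_one (by simpa using h.symm)]

end SimpleGraph

open SimpleGraph

section Coloring

variable {V : Type*} {G : SimpleGraph V}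

lemma properEdgeColoring_iff {c : Sym2 V → ℕ} : ProperEdgeColoring G c ↔
    ∀ x y z, G.Adj x y → G.Adj x z → y ≠ z → c s(x, y) ≠ c s(x, z) := by
  refine ⟨fun hc x y z hxy hxz hyz => ?_, fun hc e₁ he₁ e₂ he₂ hne ⟨x, hx₁, hx₂⟩ => ?_⟩
  · exact hc _ hxy _ hxz (Sym2.congr_right.not.mpr hyz)
      ⟨x, Sym2.mem_mk_left x y, Sym2.mem_mk_left x z⟩
  · obtain ⟨y, rfl⟩ := Sym2.mem_iff_exists.mp hx₁
    obtain ⟨z, rfl⟩ := Sym2.mem_iff_exists.mp hx₂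
    exact hc x y z he₁ he₂ (Sym2.congr_right.not.mp hne)

variable [DecidableEq V] {v : V}

def extendColoring (v : V) (c : Sym2 ({u | u ≠ v} : Set V) → ℕ) (f : V → ℕ) : Sym2 V → ℕ :=
  Sym2.lift ⟨fun x y => if hx : x = v then f y else if hy : y = v then f x
    else c s(⟨x, hx⟩, ⟨y, hy⟩), fun x y => by
      by_cases hx : x = v <;> by_cases hy : y = v <;> simp [hx, hy, Sym2.eq_swap]⟩

variable {c : Sym2 ({u | u ≠ v} : Set V) → ℕ} {f : V → ℕ}

@[simp] lemma extendColoring_mk_left (w : V) : extendColoring v c f s(v, w) = f w := by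
  simp [extendColoring]

@[simp] lemma extendColoring_mk_right (w : V) : extendColoring v c f s(w, v) = f w := by
  rw [Sym2.eq_swap, extendColoring_mk_left]

lemma extendColoring_mk {x y : V} (hx : x ≠ v) (hy : y ≠ v) :
    extendColoring v c f s(x, y) = c s(⟨x, hx⟩, ⟨y, hy⟩) := by
  simp [extendColoring, hx, hy]

lemma ProperEdgeColoring.extendColoring (hc : ProperEdgeColoring (G.induce {u | u ≠ v}) c)
    (hf : Set.InjOn f (G.neighborSet v))
    (hfresh : ∀ w x : ({u | u ≠ v} : Set V), (G.induce {u | u ≠ v}).Adj w x → G.Adj v w →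
      ∀ y, G.Adj v y → c s(w, x) ≠ f y) :
    ProperEdgeColoring G (extendColoring v c f) := by
  rw [properEdgeColoring_iff] at hc ⊢
  intro x y z hxy hxz hyz
  by_cases hx : x = v
  · subst hx
    simpa using hf.ne hxy hxz hyz
  by_cases hy : y = v
  · subst hy
    rw [extendColoring_mk_right, extendColoring_mk hx (Ne.symm hyz)]
    exact (hfresh ⟨x, hx⟩ ⟨z, _⟩ hxz hxy.symm x hxy.symm).symm
  by_cases hz : z = v
  · subst hz
    rw [extendColoring_mk_right, extendColoring_mk hx hy]
    exact hfresh ⟨x, hx⟩ ⟨y, _⟩ hxy hxz.symm x hxz.symm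
  rw [extendColoring_mk hx hy, extendColoring_mk hx hz]
  exact hc ⟨x, hx⟩ ⟨y, hy⟩ ⟨z, hz⟩ hxy hxz (by simpa using hyz)

lemma isAcyclic_twoColorSubgraph_extendColoring
    (hc : ∀ a b, (twoColorSubgraph (G.induce {u | u ≠ v}) c a b).IsAcyclic)
    (hf : Set.InjOn f (G.neighborSet v))
    (hfresh : ∀ w x : ({u | u ≠ v} : Set V), (G.induce {u | u ≠ v}).Adj w x → G.Adj v w →
      ∀ y, G.Adj v y → c s(w, x) ≠ f y) (a b : ℕ) :
    (twoColorSubgraph G (extendColoring v c f) a b).IsAcyclic := by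
  refine isAcyclic_of_isAcyclic_induce ((hc a b).anti fun x y hxy => ?_) ?_
  · exact ⟨hxy.1, by simpa [extendColoring_mk x.2 y.2] using hxy.2⟩
  rintro u p hp x hx rfl
  obtain ⟨w, y, z, hwy, hzv, ⟨hvw, hw⟩, ⟨hvy, hy⟩, ⟨hwz, hz⟩⟩ := hp.exists_adj_of_mem_support hx
  rw [extendColoring_mk_left] at hw hy
  rw [extendColoring_mk hvw.ne' hzv] at hz
  have hfwy := hf.ne hvw hvy hwy
  have hzw := hfresh ⟨w, hvw.ne'⟩ ⟨z, hzv⟩ hwz hvw w hvw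
  have hzy := hfresh ⟨w, hvw.ne'⟩ ⟨z, hzv⟩ hwz hvw y hvy
  omega

lemma extendColoring_lt {k : ℕ} (hc : ∀ e ∈ (G.induce {u | u ≠ v}).edgeSet, c e < k)
    (hf : ∀ y, G.Adj v y → f y < k) : ∀ e ∈ G.edgeSet, extendColoring v c f e < k := by
  refine Sym2.ind fun x y hxy => ?_
  by_cases hx : x = v
  · subst hx
    simpa using hf y hxy
  by_cases hy : y = v
  · subst hy
    simpa using hf x hxy.symm
  rw [extendColoring_mk hx hy]
  exact hc _ hxy

end Coloring

section Counting

variable {V : Type*} [Fintype V] [DecidableEq V] (G : SimpleGraph V) [DecidableRel G.Adj] (v : V)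

/-- The colors that `c` uses on the edges of `G - v` at neighbours of `v`. -/
def neighborColors (c : Sym2 ({u | u ≠ v} : Set V) → ℕ) : Finset ℕ :=
  ((G.neighborFinset v).subtype (· ∈ {u | u ≠ v})).biUnion fun w =>
    ((G.induce {u | u ≠ v}).neighborFinset w).image fun x => c s(w, x)

variable {G v}

lemma mem_neighborColors {c : Sym2 ({u | u ≠ v} : Set V) → ℕ} {w x : ({u | u ≠ v} : Set V)}
    (hwx : (G.induce {u | u ≠ v}).Adj w x) (hvw : G.Adj v w) : c s(w, x) ∈ neighborColors G v c :=
  mem_biUnion.mpr ⟨w, by simpa using hvw, mem_image_of_mem _ (by simpa using hwx)⟩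

lemma card_neighborColors_add_degree_le (c : Sym2 ({u | u ≠ v} : Set V) → ℕ) :
    #(neighborColors G v c) + G.degree v ≤ ∑ w ∈ G.neighborFinset v, G.degree w := by
  set N := (G.neighborFinset v).subtype (· ∈ {u | u ≠ v})
  have hN : ∀ w ∈ G.neighborFinset v, w ∈ ({u | u ≠ v} : Set V) := fun w hw =>
    ((G.mem_neighborFinset v w).mp hw).ne'
  calc #(neighborColors G v c) + G.degree v
      ≤ ∑ w ∈ N, (G.induce {u | u ≠ v}).degree w + ∑ w ∈ N, 1 := by
        gcongr
        · exact card_biUnion_le.trans (sum_le_sum fun w _ => card_image_le)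
        · rw [sum_const, smul_eq_mul, mul_one, card_subtype, filter_true_of_mem hN,
            card_neighborFinset_eq_degree]
    _ = ∑ w ∈ N, G.degree w := by
        rw [← sum_add_distrib]
        exact sum_congr rfl fun w hw => degree_induce_add_one_of_adj (by simpa [N] using hw)
    _ = ∑ w ∈ G.neighborFinset v, G.degree w := sum_subtype_of_mem (fun w => G.degree w) hN

lemma exists_fresh_colors {k : ℕ} (hsum : ∑ w ∈ G.neighborFinset v, G.degree w ≤ k)
    (c : Sym2 ({u | u ≠ v} : Set V) → ℕ) :
    ∃ f : V → ℕ, Set.InjOn f (G.neighborSet v) ∧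
      (∀ w x : ({u | u ≠ v} : Set V), (G.induce {u | u ≠ v}).Adj w x → G.Adj v w →
        ∀ y, G.Adj v y → c s(w, x) ≠ f y) ∧ ∀ y, G.Adj v y → f y < k := by
  have hcard : (G.neighborSet v).encard ≤ (↑(range k \ neighborColors G v c) : Set ℕ).encard := by
    rw [← coe_neighborFinset, Set.encard_coe_eq_coe_finsetCard, Set.encard_coe_eq_coe_finsetCard,
      Nat.cast_le, card_neighborFinset_eq_degree]
    have := card_neighborColors_add_degree_le (G := G) c
    have := le_card_sdiff (neighborColors G v c) (range k)
    rw [card_range] at this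
    omega
  obtain ⟨f, hmaps, hinj⟩ := (G.neighborSet v).toFinite.exists_injOn_of_encard_le hcard
  have hfresh y (hy : G.Adj v y) := mem_sdiff.mp (hmaps hy)
  refine ⟨f, hinj, fun w x hwx hvw y hvy h => ?_, fun y hy => mem_range.mp (hfresh y hy).1⟩
  exact (hfresh y hvy).2 (h ▸ mem_neighborColors hwx hvw)

end Counting

theorem extend_acyclic_coloring_of_small_neighbor_degree_sum_general {V : Type*} [Fintype V]
    [DecidableEq V] (G : SimpleGraph V) [DecidableRel G.Adj] (k : ℕ)
    (v : V) (hsum : ∑ w ∈ G.neighborFinset v, G.degree w ≤ k)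
    (h : HasAcyclicEdgeColoring (G.induce {u : V | u ≠ v}) k) :
    HasAcyclicEdgeColoring G k := by
  obtain ⟨c, ⟨hproper, hacyclic⟩, hck⟩ := h
  obtain ⟨f, hf, hfresh, hfk⟩ := exists_fresh_colors hsum c
  exact ⟨extendColoring v c f, ⟨hproper.extendColoring hf hfresh,
    isAcyclic_twoColorSubgraph_extendColoring hacyclic hf hfresh⟩, extendColoring_lt hck hfk⟩

/-- If `∑_{w ∈ N(v)} d(w) ≤ k` and `G - v` has an acyclic edge-coloring with `k`
colors, then so does `G`. -/
theorem extend_acyclic_coloring_of_small_neighbor_degree_sum {V : Type*} [Fintype V]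
    [DecidableEq V] (G : SimpleGraph V) [DecidableRel G.Adj] (k : ℕ) (hk : 0 < k)
    (v : V) (hsum : ∑ w ∈ G.neighborFinset v, G.degree w ≤ k)
    (h : HasAcyclicEdgeColoring (G.induce {u : V | u ≠ v}) k) :
    HasAcyclicEdgeColoring G k :=
  extend_acyclic_coloring_of_small_neighbor_degree_sum_general G k v hsum h
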